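/- Fix vectors p₁,…,p₅, u₁,…,u₅ ∈ ℝ³. For a solution T = (w, λ₁, λ₂, ρ₁,…,ρ₅, a, b, c, d, e) of the IOD system, define its embedded conic 𝒞(T) := {s·v₁ + t·v₂ : s, t ∈ ℝ, a·s² + b·t² + c·s·t + d·s + e·t + 1 = 0} ⊆ ℝ³, where v₂ := λ₂·(w × u₁) and v₁ := λ₁·(v₂ × w). Then each of the three sign-symmetric solutions T₁ := (−w, λ₁, λ₂, ρ, a, b, −c, d, −e), T₂ := (w, −λ₁, λ₂, ρ, a, b, −c, −d, e), and T₃ := (w, λ₁, −λ₂, ρ, a, b, c, −d, −e) has the same embedded conic: 𝒞(T₁) = 𝒞(T₂) = 𝒞(T₃) = 𝒞(T). -/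

import Mathlib

/-!
Each sign flip of `w`, `λ₁` or `λ₂` negates one or both frame vectors `v₁ = λ₁ (v₂ × w)`,
`v₂ = λ₂ (w × u₁)`, and the accompanying sign changes of `c, d, e` are exactly the
substitution `s ↦ -s` or `t ↦ -t` in the conic equation, which leaves the set of
points `s v₁ + t v₂` unchanged.
-/

/-- The cross product on `EuclideanSpace ℝ (Fin 3)`. -/
noncomputable def cross3 (x y : EuclideanSpace ℝ (Fin 3)) : EuclideanSpace ℝ (Fin 3) :=
  (EuclideanSpace.equiv (Fin 3) ℝ).symm
    ![x 1 * y 2 - x 2 * y 1, x 2 * y 0 - x 0 * y 2, x 0 * y 1 - x 1 * y 0]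

/-- The 15-equation polynomial system for angles-only initial orbit determination:
with `v₂ = λ₂ (w × u₁)`, `v₁ = λ₁ (v₂ × w)`, `rᵢ = pᵢ + ρᵢ uᵢ`, `xᵢ = ⟨rᵢ, v₁⟩`,
`yᵢ = ⟨rᵢ, v₂⟩`, the constraints are: `w`, `v₁`, `v₂` are unit vectors, each `rᵢ`
lies in the orbital plane, the five planar points lie on the normalized conic with
coefficients `(a,b,c,d,e)`, and the two focal polynomials vanish. -/
noncomputable def IsIODSolution (p u : Fin 5 → EuclideanSpace ℝ (Fin 3))
    (w : EuclideanSpace ℝ (Fin 3)) (l₁ l₂ : ℝ) (ρ : Fin 5 → ℝ)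
    (a b c d e : ℝ) : Prop :=
  let v₂ : EuclideanSpace ℝ (Fin 3) := l₂ • cross3 w (u 0)
  let v₁ : EuclideanSpace ℝ (Fin 3) := l₁ • cross3 v₂ w
  let r : Fin 5 → EuclideanSpace ℝ (Fin 3) := fun i => p i + ρ i • u i
  let x : Fin 5 → ℝ := fun i => (inner ℝ (r i) v₁ : ℝ)
  let y : Fin 5 → ℝ := fun i => (inner ℝ (r i) v₂ : ℝ)
  (inner ℝ w w : ℝ) = 1 ∧ (inner ℝ v₁ v₁ : ℝ) = 1 ∧ (inner ℝ v₂ v₂ : ℝ) = 1 ∧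
  (∀ i, (inner ℝ (r i) w : ℝ) = 0) ∧
  (∀ i, a * x i ^ 2 + b * y i ^ 2 + c * x i * y i + d * x i + e * y i + 1 = 0) ∧
  e ^ 2 - 4 * b - d ^ 2 + 4 * a = 0 ∧
  d * e - 2 * c = 0

/-- The conic determined by a solution tuple, embedded in ℝ³ via the frame
`v₂ = λ₂ (w × u₁)`, `v₁ = λ₁ (v₂ × w)`. -/
noncomputable def embeddedConic (u : Fin 5 → EuclideanSpace ℝ (Fin 3))
    (w : EuclideanSpace ℝ (Fin 3)) (l₁ l₂ : ℝ) (a b c d e : ℝ) :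
    Set (EuclideanSpace ℝ (Fin 3)) :=
  let v₂ : EuclideanSpace ℝ (Fin 3) := l₂ • cross3 w (u 0)
  let v₁ : EuclideanSpace ℝ (Fin 3) := l₁ • cross3 v₂ w
  {z | ∃ s t : ℝ, a * s ^ 2 + b * t ^ 2 + c * s * t + d * s + e * t + 1 = 0 ∧
    z = s • v₁ + t • v₂}

lemma cross3_neg_left (x y : EuclideanSpace ℝ (Fin 3)) : cross3 (-x) y = -cross3 x y := by
  ext i
  fin_cases i <;> simp [cross3, EuclideanSpace.equiv] <;> ring

lemma cross3_neg_right (x y : EuclideanSpace ℝ (Fin 3)) : cross3 x (-y) = -cross3 x y := by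
  ext i
  fin_cases i <;> simp [cross3, EuclideanSpace.equiv] <;> ring

section PlanarConic

variable {V : Type*} [AddCommGroup V] [Module ℝ V]

def planarConic (v₁ v₂ : V) (a b c d e : ℝ) : Set V :=
  {z | ∃ s t : ℝ, a * s ^ 2 + b * t ^ 2 + c * s * t + d * s + e * t + 1 = 0 ∧
    z = s • v₁ + t • v₂}

lemma planarConic_neg_left (v₁ v₂ : V) (a b c d e : ℝ) :
    planarConic (-v₁) v₂ a b (-c) (-d) e = planarConic v₁ v₂ a b c d e := by
  ext z
  constructor <;> rintro ⟨s, t, hq, rfl⟩ <;>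
    exact ⟨-s, t, by linear_combination hq, by module⟩

lemma planarConic_neg_right (v₁ v₂ : V) (a b c d e : ℝ) :
    planarConic v₁ (-v₂) a b (-c) d (-e) = planarConic v₁ v₂ a b c d e := by
  ext z
  constructor <;> rintro ⟨s, t, hq, rfl⟩ <;>
    exact ⟨s, -t, by linear_combination hq, by module⟩

end PlanarConic

lemma embeddedConic_eq_planarConic (u : Fin 5 → EuclideanSpace ℝ (Fin 3))
    (w : EuclideanSpace ℝ (Fin 3)) (l₁ l₂ a b c d e : ℝ) :
    embeddedConic u w l₁ l₂ a b c d e =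
      planarConic (l₁ • cross3 (l₂ • cross3 w (u 0)) w) (l₂ • cross3 w (u 0)) a b c d e :=
  rfl

theorem iod_symmetries_same_conic_general (u : Fin 5 → EuclideanSpace ℝ (Fin 3))
    (w : EuclideanSpace ℝ (Fin 3)) (l₁ l₂ : ℝ) (a b c d e : ℝ) :
    embeddedConic u (-w) l₁ l₂ a b (-c) d (-e) = embeddedConic u w l₁ l₂ a b c d e ∧
    embeddedConic u w (-l₁) l₂ a b (-c) (-d) e = embeddedConic u w l₁ l₂ a b c d e ∧
    embeddedConic u w l₁ (-l₂) a b c (-d) (-e) = embeddedConic u w l₁ l₂ a b c d e := by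
  set v₂ := l₂ • cross3 w (u 0)
  set v₁ := l₁ • cross3 v₂ w
  have flip_w_v₂ : l₂ • cross3 (-w) (u 0) = -v₂ := by rw [cross3_neg_left, smul_neg]
  have flip_w_v₁ : l₁ • cross3 (-v₂) (-w) = v₁ := by
    rw [cross3_neg_left, cross3_neg_right, neg_neg]
  have flip_l₂_v₂ : (-l₂) • cross3 w (u 0) = -v₂ := neg_smul _ _
  have flip_l₂_v₁ : l₁ • cross3 (-v₂) w = -v₁ := by rw [cross3_neg_left, smul_neg]
  simp only [embeddedConic_eq_planarConic, flip_w_v₂, flip_w_v₁, flip_l₂_v₂, flip_l₂_v₁,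
    neg_smul]
  refine ⟨planarConic_neg_right v₁ v₂ a b c d e, planarConic_neg_left v₁ v₂ a b c d e, ?_⟩
  calc planarConic (-v₁) (-v₂) a b c (-d) (-e)
      = planarConic v₁ (-v₂) a b (-c) d (-e) := by
        simpa only [neg_neg] using planarConic_neg_left v₁ (-v₂) a b (-c) d (-e)
    _ = planarConic v₁ v₂ a b c d e := planarConic_neg_right v₁ v₂ a b c d e

/-- The three sign-symmetric solutions have the same embedded conic in ℝ³. -/
theorem iod_symmetries_same_conic (p u : Fin 5 → EuclideanSpace ℝ (Fin 3))
    (w : EuclideanSpace ℝ (Fin 3)) (l₁ l₂ : ℝ) (ρ : Fin 5 → ℝ) (a b c d e : ℝ)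
    (h : IsIODSolution p u w l₁ l₂ ρ a b c d e) :
    embeddedConic u (-w) l₁ l₂ a b (-c) d (-e) = embeddedConic u w l₁ l₂ a b c d e ∧
    embeddedConic u w (-l₁) l₂ a b (-c) (-d) e = embeddedConic u w l₁ l₂ a b c d e ∧
    embeddedConic u w l₁ (-l₂) a b c (-d) (-e) = embeddedConic u w l₁ l₂ a b c d e :=
  iod_symmetries_same_conic_general u w l₁ l₂ a b c d e
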